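/- arXiv:1809.10907 — 5 statements merged into one kernel-verified Lean document; each statement's English description precedes it below -/
import Mathlib

section
/- For every integer n ≥ 1 one has σ₇(n) = σ₃(n) + 120·∑_{m=1}^{n−1} σ₃(m)·σ₃(n−m). -/
/-! Since `SL(2, ℤ)` has a one-dimensional space of modular forms of weight 8, the weight-8 form
`E₄²` is a multiple of `E₈`, and comparing constant terms shows `E₄² = E₈`. The identity is the
`n`-th coefficient of this equation between the `q`-expansions
`(1 + 240 ∑ σ₃(n) qⁿ)² = 1 + 480 ∑ σ₇(n) qⁿ`. -/

/-- `σ_k(n) = ∑_{d | n, d > 0} d^k`, the sum of the `k`-th powers of the positive divisors. -/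
def sigmaFn (k n : ℕ) : ℕ := ∑ d ∈ n.divisors, d ^ k

open UpperHalfPlane ModularForm EisensteinSeries MatrixGroups PowerSeries
open scoped ArithmeticFunction.sigma

theorem PowerSeries.coeff_sq_of_coeff_zero_eq_one {R : Type*} [CommSemiring R] {p : R⟦X⟧}
    (hp : coeff 0 p = 1) {n : ℕ} (hn : n ≠ 0) :
    coeff n (p ^ 2) = 2 * coeff n p + ∑ m ∈ Finset.Ico 1 n, coeff m p * coeff (n - m) p := by
  rw [sq, coeff_mul, Finset.Nat.sum_antidiagonal_eq_sum_range_succ_mk, Finset.sum_range_succ,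
    Finset.sum_range_eq_add_Ico _ (Nat.pos_of_ne_zero hn)]
  simp only [Nat.sub_zero, Nat.sub_self, hp]
  ring

namespace ModularForm

theorem levelOne_weight_eight_rank_one : Module.rank ℂ (ModularForm 𝒮ℒ 8) = 1 := by
  simpa [Nat.ModEq] using dimension_level_one 8 ⟨4, rfl⟩

theorem eq_qExpansion_coeff_zero_smul_E {k : ℕ} (hk : 3 ≤ k) (hk2 : Even k)
    (hrank : Module.rank ℂ (ModularForm 𝒮ℒ k) = 1) (f : ModularForm 𝒮ℒ k) :
    f = coeff 0 (qExpansion 1 f) • E hk := by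
  obtain ⟨c, rfl⟩ := (finrank_eq_one_iff_of_nonzero' _ (E_ne_zero hk hk2)).mp
    (Module.rank_eq_one_iff_finrank_eq_one.mp hrank) f
  rw [FunLike.coe_smul, ModularForm.qExpansion_smul one_pos one_mem_strictPeriods_SL,
    coeff_smul, E_qExpansion_coeff_zero hk hk2, smul_eq_mul, mul_one]

noncomputable abbrev E₈ : ModularForm 𝒮ℒ 8 := E (by norm_num : 3 ≤ 8)

theorem qExpansion_E₄_sq_eq_qExpansion_E₈ : qExpansion 1 E₄ ^ 2 = qExpansion 1 E₈ := by
  have hmul : qExpansion 1 (E₄.mul E₄) = qExpansion 1 E₄ ^ 2 := by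
    rw [sq, ModularForm.qExpansion_mul one_pos one_mem_strictPeriods_SL]
  have hE₄_sq := eq_qExpansion_coeff_zero_smul_E (k := 8) (by norm_num) ⟨4, rfl⟩
    levelOne_weight_eight_rank_one (E₄.mul E₄)
  rw [hmul, coeff_zero_eq_constantCoeff_apply, map_pow, ← coeff_zero_eq_constantCoeff_apply,
    E_qExpansion_coeff_zero _ ⟨2, rfl⟩, one_pow, one_smul] at hE₄_sq
  rw [← hmul, hE₄_sq]

theorem E₄_qExpansion_coeff {m : ℕ} (hm : m ≠ 0) : coeff m (qExpansion 1 E₄) = 240 * σ 3 m := by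
  norm_num [E_qExpansion_coeff _ ⟨2, rfl⟩, hm, show bernoulli 4 = -1 / 30 by decide +kernel]

theorem E₈_qExpansion_coeff {m : ℕ} (hm : m ≠ 0) : coeff m (qExpansion 1 E₈) = 480 * σ 7 m := by
  norm_num [E_qExpansion_coeff _ ⟨4, rfl⟩, hm, show bernoulli 8 = -1 / 30 by decide +kernel]

end ModularForm

theorem sigmaFn_eq_sigma (k n : ℕ) : sigmaFn k n = σ k n :=
  ArithmeticFunction.sigma_apply.symm

open Finset in
/-- For every integer `n ≥ 1`, `σ₇(n) = σ₃(n) + 120·∑_{m=1}^{n−1} σ₃(m)·σ₃(n−m)`. -/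
theorem sigma_seven_eq (n : ℕ) (hn : 1 ≤ n) :
    sigmaFn 7 n = sigmaFn 3 n + 120 * ∑ m ∈ Finset.Ico 1 n, sigmaFn 3 m * sigmaFn 3 (n - m) := by
  have hconv : ∑ m ∈ Ico 1 n, coeff m (qExpansion 1 E₄) * coeff (n - m) (qExpansion 1 E₄) =
      240 * 240 * ∑ m ∈ Ico 1 n, (σ 3 m * σ 3 (n - m) : ℂ) := by
    rw [mul_sum]
    refine sum_congr rfl fun m hm => ?_
    rw [mem_Ico] at hm
    rw [E₄_qExpansion_coeff (by omega), E₄_qExpansion_coeff (by omega)]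
    ring
  have hcoeff := congrArg (coeff n) qExpansion_E₄_sq_eq_qExpansion_E₈
  rw [coeff_sq_of_coeff_zero_eq_one (E_qExpansion_coeff_zero _ ⟨2, rfl⟩) (by omega), hconv,
    E₄_qExpansion_coeff (by omega), E₈_qExpansion_coeff (by omega)] at hcoeff
  simp only [sigmaFn_eq_sigma]
  exact_mod_cast (by linear_combination -hcoeff / 480 :
    (σ 7 n : ℂ) = σ 3 n + 120 * ∑ m ∈ Ico 1 n, (σ 3 m * σ 3 (n - m) : ℂ))
end

section
/- (Euler's pentagonal number theorem) For every complex number q with |q| < 1, ∏_{n≥1} (1 − q^n) = 1 + ∑_{k≥1} (−1)^k·(q^{k(3k−1)/2} + q^{k(3k+1)/2}). -/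
/-!
Set `A k = ∑ n, x ^ ((k + 1) * n) * ∏ i ≤ n, (1 - x ^ (k + i + 1))`. Telescoping gives
`A k = 1 - x ^ (2k + 3) - x ^ (3k + 5) * A (k + 1)`, and unrolling this recurrence from
`∏ (1 - x ^ (n + 1)) = 1 - x - x ^ 2 * A 0` yields the first pentagonal terms plus the remainder
`± x ^ ((k + 1) * (3k + 4) / 2) * A k`. Mathlib's `Pentagonal.tprod_one_sub_pow` does this algebra in
any topological ring, so only convergence is left: for `‖x‖ < 1` every finite product
`∏ (1 - x ^ m)` over distinct `m` is bounded by `exp (1 - ‖x‖)⁻¹`, so `‖A k‖` is bounded uniformly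
in `k` and the remainder tends to zero.
-/

open Filter Topology Finset

theorem pentagonal_neg_natCast (k : ℕ) : pentagonal (-k) = k * (3 * k + 1) / 2 := by
  grind [pentagonal_neg]

theorem pentagonal_natCast_add_one (k : ℕ) :
    pentagonal (k + 1) = (k + 1) * (3 * (k + 1) - 1) / 2 := by
  grind [pentagonal_def]

section

variable {R : Type*} [NormedCommRing R] [NormOneClass R] {x : R}

theorem norm_pow_le_pow_of_le (hx : ‖x‖ < 1) {m n : ℕ} (h : m ≤ n) : ‖x ^ n‖ ≤ ‖x‖ ^ m :=
  (norm_pow_le x n).trans (pow_le_pow_of_le_one (norm_nonneg x) hx.le h)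

theorem norm_neg_one_pow_mul_le (m : ℕ) (y : R) : ‖(-1) ^ m * y‖ ≤ ‖y‖ :=
  calc ‖(-1) ^ m * y‖ ≤ ‖(-1 : R)‖ ^ m * ‖y‖ :=
        (norm_mul_le _ _).trans (by gcongr; exact norm_pow_le _ _)
    _ = ‖y‖ := by simp

theorem norm_prod_one_add_le_exp_sum {ι : Type*} (s : Finset ι) (f : ι → R) :
    ‖∏ i ∈ s, (1 + f i)‖ ≤ Real.exp (∑ i ∈ s, ‖f i‖) := by
  have h := s.norm_prod_one_add_sub_one_le f
  calc ‖∏ i ∈ s, (1 + f i)‖ ≤ ‖∏ i ∈ s, (1 + f i) - 1‖ + ‖(1 : R)‖ := norm_le_norm_sub_add _ _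
    _ ≤ Real.exp (∑ i ∈ s, ‖f i‖) := by rw [norm_one]; linarith

namespace Pentagonal

theorem norm_prod_one_sub_pow_le (hx : ‖x‖ < 1) (k n : ℕ) :
    ‖∏ i ∈ range n, (1 - x ^ (k + i + 1))‖ ≤ Real.exp (1 - ‖x‖)⁻¹ := by
  simp_rw [sub_eq_add_neg]
  refine (norm_prod_one_add_le_exp_sum _ _).trans (Real.exp_le_exp.mpr ?_)
  calc ∑ i ∈ range n, ‖-x ^ (k + i + 1)‖ ≤ ∑ i ∈ Ico 0 n, ‖x‖ ^ i := by
        rw [← range_eq_Ico]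
        exact sum_le_sum fun i _ ↦ (norm_neg _).trans_le (norm_pow_le_pow_of_le hx (by omega))
    _ ≤ ‖x‖ ^ 0 / (1 - ‖x‖) := geom_sum_Ico_le_of_lt_one (norm_nonneg x) hx
    _ = (1 - ‖x‖)⁻¹ := by rw [pow_zero, one_div]

theorem norm_pow_mul_prod_one_sub_pow_le (hx : ‖x‖ < 1) (k n : ℕ) :
    ‖x ^ ((k + 1) * n) * ∏ i ∈ range (n + 1), (1 - x ^ (k + i + 1))‖ ≤
      Real.exp (1 - ‖x‖)⁻¹ * ‖x‖ ^ n := by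
  rw [mul_comm (Real.exp _)]
  exact (norm_mul_le _ _).trans <| mul_le_mul (norm_pow_le_pow_of_le hx (by nlinarith))
    (norm_prod_one_sub_pow_le hx k (n + 1)) (norm_nonneg _) (by positivity)

theorem norm_tsum_pow_mul_prod_one_sub_pow_le (hx : ‖x‖ < 1) (k : ℕ) :
    ‖∑' n, x ^ ((k + 1) * n) * ∏ i ∈ range (n + 1), (1 - x ^ (k + i + 1))‖ ≤
      Real.exp (1 - ‖x‖)⁻¹ * (1 - ‖x‖)⁻¹ :=
  tsum_of_norm_bounded ((hasSum_geometric_of_lt_one (norm_nonneg x) hx).mul_left _)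
    (norm_pow_mul_prod_one_sub_pow_le hx k)

theorem tendsto_remainder_atTop_nhds_zero (hx : ‖x‖ < 1) :
    Tendsto (fun k ↦ (-1) ^ (k + 1) * x ^ ((k + 1) * (3 * k + 4) / 2) *
      ∑' n, x ^ ((k + 1) * n) * ∏ i ∈ range (n + 1), (1 - x ^ (k + i + 1))) atTop (𝓝 0) := by
  refine squeeze_zero_norm (fun k ↦ ?_) <| by
    simpa using (tendsto_pow_atTop_nhds_zero_of_lt_one (norm_nonneg x) hx).mul_const
      (Real.exp (1 - ‖x‖)⁻¹ * (1 - ‖x‖)⁻¹)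
  rw [mul_assoc]
  exact (norm_neg_one_pow_mul_le _ _).trans <| (norm_mul_le _ _).trans <|
    mul_le_mul (norm_pow_le_pow_of_le hx (by grind)) (norm_tsum_pow_mul_prod_one_sub_pow_le hx k)
      (norm_nonneg _) (by positivity)

variable [CompleteSpace R]

theorem summable_neg_one_pow_mul_pow (hx : ‖x‖ < 1) {e : ℕ → ℕ} (he : ∀ k, k ≤ e k) :
    Summable fun k ↦ (-1 : R) ^ k * x ^ e k :=
  .of_norm_bounded (summable_geometric_of_lt_one (norm_nonneg x) hx) fun k ↦
    (norm_neg_one_pow_mul_le k _).trans (norm_pow_le_pow_of_le hx (he k))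

theorem summable_pow_mul_prod_one_sub_pow (hx : ‖x‖ < 1) (k : ℕ) :
    Summable fun n ↦ x ^ ((k + 1) * n) * ∏ i ∈ range (n + 1), (1 - x ^ (k + i + 1)) :=
  .of_norm_bounded ((summable_geometric_of_lt_one (norm_nonneg x) hx).mul_left _)
    (norm_pow_mul_prod_one_sub_pow_le hx k)

theorem multipliable_one_sub_pow (hx : ‖x‖ < 1) (k : ℕ) :
    Multipliable fun n ↦ 1 - x ^ (n + k + 1) := by
  simp_rw [sub_eq_add_neg]
  refine multipliable_one_add_of_summable <|
    (summable_geometric_of_lt_one (norm_nonneg x) hx).of_nonneg_of_le (fun _ ↦ norm_nonneg _)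
      fun n ↦ ?_
  rw [norm_neg]
  exact norm_pow_le_pow_of_le hx (by omega)

theorem tprod_one_sub_pow_of_norm_lt_one (hx : ‖x‖ < 1) :
    ∏' n, (1 - x ^ (n + 1)) =
      1 + ∑' k : ℕ, (-1 : R) ^ (k + 1) *
        (x ^ ((k + 1) * (3 * (k + 1) - 1) / 2) + x ^ ((k + 1) * (3 * (k + 1) + 1) / 2)) := by
  set a : ℕ → R := fun k ↦ (-1) ^ k * x ^ (k * (3 * k + 1) / 2)
  set b : ℕ → R := fun k ↦ (-1) ^ k * x ^ ((k + 1) * (3 * (k + 1) - 1) / 2)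
  have ha : Summable a := summable_neg_one_pow_mul_pow hx fun k ↦ by grind [Nat.le_mul_self k]
  have hb : Summable b := summable_neg_one_pow_mul_pow hx fun k ↦ by grind
  have hab : (fun k : ℕ ↦ (-1) ^ k * (x ^ pentagonal (-k) - x ^ pentagonal (k + 1))) = a - b := by
    ext k
    simp only [pentagonal_neg_natCast, pentagonal_natCast_add_one, mul_sub, Pi.sub_apply, a, b]
  calc ∏' n, (1 - x ^ (n + 1)) = ∑' k, (a k - b k) := by
        rw [tprod_one_sub_pow (tendsto_pow_atTop_nhds_zero_of_norm_lt_one hx)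
          (summable_pow_mul_prod_one_sub_pow hx) (multipliable_one_sub_pow hx) (hab ▸ ha.sub hb)
          (tendsto_remainder_atTop_nhds_zero hx), hab]
        rfl
    _ = a 0 + ∑' k, (a (k + 1) - b k) := by
        rw [ha.tsum_sub hb, ha.tsum_eq_zero_add, ((summable_nat_add_iff 1).mpr ha).tsum_sub hb]
        ring
    _ = _ := by
        congr 1
        · simp [a]
        · congr 1 with k
          simp only [a, b]
          ring

end Pentagonal

end

/-- Euler's pentagonal number theorem: for `|q| < 1`,
`∏_{n≥1} (1 − q^n) = 1 + ∑_{k≥1} (−1)^k·(q^{k(3k−1)/2} + q^{k(3k+1)/2})`. -/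
theorem pentagonal_number_theorem (q : ℂ) (hq : ‖q‖ < 1) :
    ∏' n : ℕ, (1 - q ^ (n + 1)) =
      1 + ∑' k : ℕ, (-1 : ℂ) ^ (k + 1) *
        (q ^ ((k + 1) * (3 * (k + 1) - 1) / 2) + q ^ ((k + 1) * (3 * (k + 1) + 1) / 2)) :=
  Pentagonal.tprod_one_sub_pow_of_norm_lt_one hq
end

section
/- Fix an integer k. For each integer n ≥ 1 define the Hecke operator T(n) on sequences a: ℤ_{≥0} → ℂ by (T(n)a)(m) = ∑_{d | gcd(m,n), d>0} d^{k−1}·a(mn/d²) (with the convention gcd(0,n) = n). Then for all m, n ≥ 1 one has the composition identity T(n)∘T(m) = ∑_{d | gcd(n,m), d>0} d^{k−1}·T(nm/d²), as operators on the space of all sequences a: ℤ_{≥0} → ℂ. -/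
/-!
Unfolded, `(T(n) T(m) a)(N)` is the sum of `t^(k-1) a(Nnm/t²)` over the products `t = d e` of the
pairs with `d ∣ (N, n)` and `e ∣ (Nn/d², m)`, and the right-hand side is the same sum over the
pairs obtained by exchanging `N` and `m`. In terms of divisibility both sets are
`{(d, e) : d ∣ N, d ∣ n, e ∣ m, d² e ∣ N n}` up to that exchange, and
`(d, e) ↦ (d·(t, m)/(t, N), e·(t, N)/(t, m))` is a product-preserving bijection between them
whose inverse is the same map with `N` and `m` exchanged.
-/

/-- The Hecke operator `T(n)` in weight `k`, acting on sequences `a : ℤ_{≥0} → ℂ` of Fourier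
coefficients: `(T(n)a)(m) = ∑_{d | gcd(m,n), d>0} d^{k−1}·a(mn/d²)`.  (Note that in Lean's
convention `Nat.gcd 0 n = n`, matching the convention `gcd(0,n) = n`.) -/
noncomputable def heckeT (k : ℤ) (n : ℕ) (a : ℕ → ℂ) : ℕ → ℂ := fun m =>
  ∑ d ∈ (Nat.gcd m n).divisors, (d : ℂ) ^ (k - 1) * a (m * n / d ^ 2)

open Finset

/-- The pairs `(d, e)` indexing the double sum `(T(n) T(m) a)(N)`. -/
def heckePairs (N n m : ℕ) : Finset (ℕ × ℕ) :=
  ((N.gcd n).divisors.sigma fun d => ((N * n / d ^ 2).gcd m).divisors).map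
    (Equiv.sigmaEquivProd ℕ ℕ).toEmbedding

def heckeSwap (N m : ℕ) (x : ℕ × ℕ) : ℕ × ℕ :=
  (x.1 * (x.1 * x.2).gcd m / (x.1 * x.2).gcd N, x.2 * (x.1 * x.2).gcd N / (x.1 * x.2).gcd m)

section Arithmetic

variable {N n m : ℕ}

theorem sq_dvd_mul {d a b : ℕ} (ha : d ∣ a) (hb : d ∣ b) : d ^ 2 ∣ a * b :=
  sq d ▸ mul_dvd_mul ha hb

theorem mem_heckePairs {x : ℕ × ℕ} :
    x ∈ heckePairs N n m ↔
      x.1 ∈ (N.gcd n).divisors ∧ x.2 ∈ ((N * n / x.1 ^ 2).gcd m).divisors := by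
  simp [heckePairs]

theorem mem_heckePairs_iff_dvd (hn : n ≠ 0) (hNm : N ≠ 0 ∨ m ≠ 0) {x : ℕ × ℕ} :
    x ∈ heckePairs N n m ↔ x.1 ∣ N ∧ x.1 ∣ n ∧ x.2 ∣ m ∧ x.1 ^ 2 * x.2 ∣ N * n := by
  rw [mem_heckePairs, Nat.mem_divisors, Nat.mem_divisors, Nat.dvd_gcd_iff, Nat.dvd_gcd_iff]
  constructor
  · rintro ⟨⟨⟨hdN, hdn⟩, -⟩, ⟨he, hem⟩, -⟩
    exact ⟨hdN, hdn, hem, (Nat.dvd_div_iff_mul_dvd (sq_dvd_mul hdN hdn)).1 he⟩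
  · rintro ⟨hdN, hdn, hem, hde⟩
    refine ⟨⟨⟨hdN, hdn⟩, Nat.gcd_ne_zero_right hn⟩,
      ⟨(Nat.dvd_div_iff_mul_dvd (sq_dvd_mul hdN hdn)).2 hde, hem⟩, ?_⟩
    rcases hNm with hN | hm
    · have hd : x.1 ≠ 0 := ne_zero_of_dvd_ne_zero hn hdn
      refine Nat.gcd_ne_zero_left ((Nat.div_ne_zero_iff_of_dvd (sq_dvd_mul hdN hdn)).2 ?_)
      exact ⟨mul_ne_zero hN hn, pow_ne_zero 2 hd⟩
    · exact Nat.gcd_ne_zero_right hm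

theorem ne_zero_dvd_dvd_of_mem_heckePairs {x : ℕ × ℕ} (hx : x ∈ heckePairs N n m) :
    x.1 * x.2 ≠ 0 ∧ x.1 ∣ N ∧ x.2 ∣ m := by
  rw [mem_heckePairs] at hx
  obtain ⟨hd, he⟩ := hx
  exact ⟨mul_ne_zero (Nat.pos_of_mem_divisors hd).ne' (Nat.pos_of_mem_divisors he).ne',
    (Nat.dvd_of_mem_divisors hd).trans (Nat.gcd_dvd_left _ _),
    (Nat.dvd_of_mem_divisors he).trans (Nat.gcd_dvd_right _ _)⟩

theorem gcd_dvd_mul_gcd {t d : ℕ} (h : t ∣ d * m) (N : ℕ) : t.gcd N ∣ d * t.gcd m :=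
  (Nat.gcd_dvd_left _ _).trans (by
    rw [← Nat.gcd_mul_left]
    exact Nat.dvd_gcd (dvd_mul_left t d) h)

theorem div_gcd_dvd {a t X : ℕ} (ht : t ≠ 0) (ha : t.gcd N ∣ a) (htX : a ∣ t * X)
    (hNX : a ∣ N * X) : a / t.gcd N ∣ X := by
  rw [Nat.div_dvd_iff_dvd_mul ha (Nat.gcd_pos_of_pos_left _ (Nat.pos_of_ne_zero ht)),
    ← Nat.gcd_mul_right]
  exact Nat.dvd_gcd htX hNX

theorem gcd_dvd_heckeSwap_num {x : ℕ × ℕ} (hN : x.1 ∣ N) (hm : x.2 ∣ m) :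
    (x.1 * x.2).gcd N ∣ x.1 * (x.1 * x.2).gcd m ∧ (x.1 * x.2).gcd m ∣ x.2 * (x.1 * x.2).gcd N :=
  ⟨gcd_dvd_mul_gcd (mul_dvd_mul_left _ hm) N,
    gcd_dvd_mul_gcd (mul_comm x.1 x.2 ▸ mul_dvd_mul_left _ hN) m⟩

theorem heckeSwap_fst_mul_snd {x : ℕ × ℕ} (ht : x.1 * x.2 ≠ 0) (hN : x.1 ∣ N) (hm : x.2 ∣ m) :
    (heckeSwap N m x).1 * (heckeSwap N m x).2 = x.1 * x.2 := by
  obtain ⟨hg, hh⟩ := gcd_dvd_heckeSwap_num hN hm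
  obtain ⟨d, e⟩ := x
  dsimp only [heckeSwap] at *
  rw [Nat.div_mul_div_comm hg hh,
    show d * (d * e).gcd m * (e * (d * e).gcd N) = d * e * ((d * e).gcd N * (d * e).gcd m) by ring,
    Nat.mul_div_cancel _ (Nat.pos_of_ne_zero (mul_ne_zero (Nat.gcd_ne_zero_left ht)
      (Nat.gcd_ne_zero_left ht)))]

theorem heckeSwap_heckeSwap {x : ℕ × ℕ} (ht : x.1 * x.2 ≠ 0) (hN : x.1 ∣ N) (hm : x.2 ∣ m) :
    heckeSwap m N (heckeSwap N m x) = x := by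
  conv_lhs => rw [heckeSwap, heckeSwap_fst_mul_snd ht hN hm]
  obtain ⟨hg, hh⟩ := gcd_dvd_heckeSwap_num hN hm
  obtain ⟨d, e⟩ := x
  dsimp only [heckeSwap] at *
  rw [Nat.div_mul_cancel hg, Nat.div_mul_cancel hh,
    Nat.mul_div_cancel _ (Nat.gcd_pos_of_pos_left _ (Nat.pos_of_ne_zero ht)),
    Nat.mul_div_cancel _ (Nat.gcd_pos_of_pos_left _ (Nat.pos_of_ne_zero ht))]

theorem heckeSwap_dvd {x : ℕ × ℕ} (ht : x.1 * x.2 ≠ 0) (hN : x.1 ∣ N) (hn : x.1 ∣ n)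
    (hm : x.2 ∣ m) (hNn : x.1 ^ 2 * x.2 ∣ N * n) :
    (heckeSwap N m x).1 ∣ m ∧ (heckeSwap N m x).1 ∣ n ∧ (heckeSwap N m x).2 ∣ N ∧
      (heckeSwap N m x).1 ^ 2 * (heckeSwap N m x).2 ∣ m * n := by
  rw [sq, mul_assoc, heckeSwap_fst_mul_snd ht hN hm]
  obtain ⟨hg, hh⟩ := gcd_dvd_heckeSwap_num hN hm
  obtain ⟨d, e⟩ := x
  dsimp only [heckeSwap] at *
  have hgN := Nat.gcd_dvd_right (d * e) N
  have hhm := Nat.gcd_dvd_right (d * e) m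
  have hht := Nat.gcd_dvd_left (d * e) m
  refine ⟨div_gcd_dvd ht hg (mul_dvd_mul (dvd_mul_right d e) hhm) (mul_dvd_mul hN hhm),
    div_gcd_dvd ht hg ?_ ((mul_dvd_mul_left d hht).trans (by rwa [← mul_assoc, ← sq])),
    div_gcd_dvd ht hh ?_ (mul_dvd_mul hm hgN), ?_⟩
  · rw [mul_comm d ((d * e).gcd m)]
    exact mul_dvd_mul hht hn
  · exact (mul_dvd_mul_left e hgN).trans ⟨d, by ring⟩
  · rw [Nat.div_mul_right_comm hg]
    refine div_gcd_dvd ht (hg.mul_right _) ?_ ?_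
    · rw [show d * (d * e).gcd m * (d * e) = d * e * ((d * e).gcd m * d) by ring]
      exact mul_dvd_mul_left _ (mul_dvd_mul hhm hn)
    · rw [show d * (d * e).gcd m * (d * e) = (d * e).gcd m * (d ^ 2 * e) by ring,
        show N * (m * n) = m * (N * n) by ring]
      exact mul_dvd_mul hhm hNn

theorem heckeSwap_mem (hn : n ≠ 0) (hNm : N ≠ 0 ∨ m ≠ 0) {x : ℕ × ℕ}
    (hx : x ∈ heckePairs N n m) : heckeSwap N m x ∈ heckePairs m n N := by
  obtain ⟨ht, -, -⟩ := ne_zero_dvd_dvd_of_mem_heckePairs hx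
  obtain ⟨hN, hn', hm, hNn⟩ := (mem_heckePairs_iff_dvd hn hNm).1 hx
  exact (mem_heckePairs_iff_dvd hn hNm.symm).2 (heckeSwap_dvd ht hN hn' hm hNn)

theorem sum_heckePairs_comm {M : Type*} [AddCommMonoid M] (hn : n ≠ 0) (hm : m ≠ 0)
    (F : ℕ → M) :
    ∑ x ∈ heckePairs N n m, F (x.1 * x.2) = ∑ x ∈ heckePairs m n N, F (x.1 * x.2) := by
  refine sum_nbij' (heckeSwap N m) (heckeSwap m N) (fun _ => heckeSwap_mem hn (Or.inr hm))
    (fun _ => heckeSwap_mem hn (Or.inl hm)) (fun x hx => ?_) (fun x hx => ?_) (fun x hx => ?_)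
  all_goals obtain ⟨ht, hd, he⟩ := ne_zero_dvd_dvd_of_mem_heckePairs hx
  · exact heckeSwap_heckeSwap ht hd he
  · exact heckeSwap_heckeSwap ht hd he
  · rw [heckeSwap_fst_mul_snd ht hd he]

end Arithmetic

theorem zpow_mul_heckeT_apply (k : ℤ) (a : ℕ → ℂ) {d : ℕ} (hd : d ≠ 0) (n M : ℕ) :
    (d : ℂ) ^ (k - 1) * heckeT k n a M = ∑ e ∈ (M.gcd n).divisors,
      ((d * e : ℕ) : ℂ) ^ (k - 1) * a (d ^ 2 * (M * n) / (d * e) ^ 2) := by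
  rw [heckeT, mul_sum]
  refine sum_congr rfl fun e _ => ?_
  rw [mul_pow, Nat.mul_div_mul_left _ _ (by positivity), Nat.cast_mul, mul_zpow, mul_assoc]

theorem heckeT_heckeT_apply (k : ℤ) (n m : ℕ) (a : ℕ → ℂ) (N : ℕ) :
    heckeT k n (heckeT k m a) N =
      ∑ x ∈ heckePairs N n m,
        ((x.1 * x.2 : ℕ) : ℂ) ^ (k - 1) * a (N * n * m / (x.1 * x.2) ^ 2) := by
  rw [heckeT, heckePairs, sum_map, sum_sigma]
  refine sum_congr rfl fun d hd => ?_
  obtain ⟨hdN, hdn⟩ := Nat.dvd_gcd_iff.1 (Nat.dvd_of_mem_divisors hd)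
  rw [zpow_mul_heckeT_apply k a (Nat.pos_of_mem_divisors hd).ne', ← mul_assoc,
    Nat.mul_div_cancel' (sq_dvd_mul hdN hdn)]
  rfl

theorem sum_zpow_mul_heckeT_apply (k : ℤ) (n m : ℕ) (a : ℕ → ℂ) (N : ℕ) :
    ∑ c ∈ (n.gcd m).divisors, (c : ℂ) ^ (k - 1) * heckeT k (n * m / c ^ 2) a N =
      ∑ x ∈ heckePairs m n N,
        ((x.1 * x.2 : ℕ) : ℂ) ^ (k - 1) * a (N * n * m / (x.1 * x.2) ^ 2) := by
  rw [heckePairs, sum_map, sum_sigma, Nat.gcd_comm n m]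
  refine sum_congr rfl fun c hc => ?_
  obtain ⟨hcm, hcn⟩ := Nat.dvd_gcd_iff.1 (Nat.dvd_of_mem_divisors hc)
  have hc2 : c ^ 2 * (N * (n * m / c ^ 2)) = N * n * m := by
    rw [mul_left_comm, Nat.mul_div_cancel' (sq_dvd_mul hcn hcm), mul_assoc]
  rw [zpow_mul_heckeT_apply k a (Nat.pos_of_mem_divisors hc).ne', hc2, Nat.gcd_comm N,
    mul_comm n m]
  rfl

/-- Composition identity for Hecke operators:
`T(n)∘T(m) = ∑_{d | gcd(n,m), d>0} d^{k−1}·T(nm/d²)` as operators on sequences. -/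
theorem heckeT_comp (k : ℤ) (m n : ℕ) (hm : 1 ≤ m) (hn : 1 ≤ n) :
    heckeT k n ∘ heckeT k m =
      fun a => fun m' =>
        ∑ d ∈ (Nat.gcd n m).divisors, (d : ℂ) ^ (k - 1) * heckeT k (n * m / d ^ 2) a m' := by
  funext a N
  rw [Function.comp_apply, heckeT_heckeT_apply, sum_zpow_mul_heckeT_apply]
  exact sum_heckePairs_comm (by omega) (by omega) fun t => (t : ℂ) ^ (k - 1) * a (N * n * m / t ^ 2)
end

section
/- Let k be an integer and let a: ℤ_{≥1} → ℂ satisfy a(1) = 1, a(mn) = a(m)·a(n) whenever gcd(m,n) = 1, and a(p^{j+1}) = a(p)·a(p^j) − p^{k−1}·a(p^{j−1}) for every prime p and every j ≥ 1. Then for every complex number s such that ∑_{n≥1} |a(n)|·n^{−Re(s)} converges, one has the absolutely convergent Euler product ∑_{n≥1} a(n)·n^{−s} = ∏_{p prime} (1 − a(p)·p^{−s} + p^{k−1−2s})^{−1}. -/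
open Complex

/-!
The terms `a(n) n^{-s}` form an absolutely summable multiplicative sequence, so the general Euler
product identifies the Dirichlet series with `∏_p ∑_e a(p^e) p^{-es}`. The Hecke recursion says
that `g e = a(p^e) p^{-es}` satisfies `g (e+2) = c g (e+1) - d g e` with `c = a(p) p^{-s}` and
`d = p^{k-1-2s}`, starting from `g 0 = 1`, `g 1 = c`; summing the recursion gives
`(1 - c + d) ∑ g = 1`, which is the local factor.
-/

theorem mul_tsum_eq_one_of_linear_recurrence {R : Type*} [Ring R] [TopologicalSpace R]
    [IsTopologicalRing R] [T2Space R] {g : ℕ → R} {c d : R} (hg : Summable g)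
    (hg0 : g 0 = 1) (hg1 : g 1 = c) (hrec : ∀ e, g (e + 2) = c * g (e + 1) - d * g e) :
    (1 - c + d) * ∑' e, g e = 1 := by
  have hg' : Summable (fun e => g (e + 1)) := (summable_nat_add_iff 1).2 hg
  have hS : ∑' e, g e = 1 + ∑' e, g (e + 1) := by rw [hg.tsum_eq_zero_add, hg0]
  have hT : ∑' e, g (e + 1) = c + ∑' e, g (e + 2) := by rw [hg'.tsum_eq_zero_add, hg1]
  have hU : ∑' e, g (e + 2) = c * ∑' e, g (e + 1) - d * ∑' e, g e := by
    simp_rw [hrec]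
    rw [(hg'.mul_left c).tsum_sub (hg.mul_left d), hg'.tsum_mul_left, hg.tsum_mul_left]
  rw [hU, hS] at hT
  generalize ∑' e, g (e + 1) = T at hS hT
  calc (1 - c + d) * ∑' e, g e = 1 + (T - (c + (c * T - d * (1 + T)))) := by
        rw [hS]; noncomm_ring
    _ = 1 := by rw [← hT, sub_self, add_zero]

namespace LSeries

theorem term_mul_of_coprime {a : ℕ → ℂ}
    (hmul : ∀ m n : ℕ, 1 ≤ m → 1 ≤ n → Nat.gcd m n = 1 → a (m * n) = a m * a n) (s : ℂ)
    {m n : ℕ} (hmn : m.Coprime n) : term a s (m * n) = term a s m * term a s n := by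
  rcases Nat.eq_zero_or_pos m with rfl | hm
  · simp
  rcases Nat.eq_zero_or_pos n with rfl | hn
  · simp
  rw [term_of_ne_zero (by positivity), term_of_ne_zero hm.ne', term_of_ne_zero hn.ne',
    hmul m n hm hn hmn, Nat.cast_mul, natCast_mul_natCast_cpow, mul_div_mul_comm]

theorem summable_norm_term_iff {a : ℕ → ℂ} {s : ℂ} :
    Summable (‖term a s ·‖) ↔
      Summable (fun n : ℕ => ‖a (n + 1)‖ * ((n + 1 : ℕ) : ℝ) ^ (-s.re)) := by
  rw [← summable_nat_add_iff 1]
  refine summable_congr fun n => ?_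
  rw [norm_term_eq, if_neg n.succ_ne_zero, Real.rpow_neg (Nat.cast_nonneg _), div_eq_mul_inv]

theorem tsum_term_eq_tsum_add_one (a : ℕ → ℂ) (s : ℂ) :
    ∑' n, term a s n = ∑' n : ℕ, a (n + 1) * ((n + 1 : ℕ) : ℂ) ^ (-s) := by
  rw [← Nat.succ_injective.tsum_eq]
  · simp [term_of_ne_zero, cpow_neg, div_eq_mul_inv]
  · rintro (_ | m) hn
    exacts [absurd (term_zero a s) hn, ⟨m, rfl⟩]

theorem term_pow_add_two {a : ℕ → ℂ} {p : ℕ} (hp : p ≠ 0) {k : ℂ}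
    (hrec : ∀ j : ℕ, 1 ≤ j →
      a (p ^ (j + 1)) = a p * a (p ^ j) - (p : ℂ) ^ (k - 1) * a (p ^ (j - 1)))
    (s : ℂ) (e : ℕ) :
    term a s (p ^ (e + 2)) =
      a p * (p : ℂ) ^ (-s) * term a s (p ^ (e + 1)) -
        (p : ℂ) ^ (k - 1 - 2 * s) * term a s (p ^ e) := by
  have hterm : ∀ m, term a s (p ^ m) = a (p ^ m) * ((p ^ m : ℕ) : ℂ) ^ (-s) := fun m => by
    rw [term_of_ne_zero (pow_ne_zero m hp), div_eq_mul_inv, ← cpow_neg]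
  have hpow : ∀ m, ((p ^ (m + 1) : ℕ) : ℂ) ^ (-s) = (p : ℂ) ^ (-s) * ((p ^ m : ℕ) : ℂ) ^ (-s) :=
    fun m => by rw [pow_succ', Nat.cast_mul, natCast_mul_natCast_cpow]
  have hp' : (p : ℂ) ≠ 0 := Nat.cast_ne_zero.2 hp
  rw [hterm, hterm, hterm, hrec (e + 1) le_add_self, Nat.add_sub_cancel, hpow, hpow,
    show k - 1 - 2 * s = k - 1 + -s + -s by ring, cpow_add _ _ hp', cpow_add _ _ hp']
  ring

theorem tsum_term_pow_eq_inv {a : ℕ → ℂ} {p : ℕ} (hp : 1 < p) {k : ℂ} (h1 : a 1 = 1)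
    (hrec : ∀ j : ℕ, 1 ≤ j →
      a (p ^ (j + 1)) = a p * a (p ^ j) - (p : ℂ) ^ (k - 1) * a (p ^ (j - 1)))
    {s : ℂ} (hsum : Summable (‖term a s ·‖)) :
    ∑' e, term a s (p ^ e) = (1 - a p * (p : ℂ) ^ (-s) + (p : ℂ) ^ (k - 1 - 2 * s))⁻¹ := by
  refine eq_inv_of_mul_eq_one_right (mul_tsum_eq_one_of_linear_recurrence ?_ ?_ ?_
    (term_pow_add_two (by omega) hrec s))
  · exact (hsum.comp_injective (Nat.pow_right_injective hp)).of_norm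
  · simp [h1]
  · simp [term_of_ne_zero (by omega : p ≠ 0), cpow_neg, div_eq_mul_inv]

end LSeries

open LSeries in
/-- Euler product for the Dirichlet series attached to a normalized Hecke eigenform of weight
`k`: if `a(1) = 1`, `a(mn) = a(m)a(n)` for coprime `m,n`, and
`a(p^{j+1}) = a(p)a(p^j) − p^{k−1}a(p^{j−1})` for all primes `p` and `j ≥ 1`, then for every
`s ∈ ℂ` for which `∑_{n≥1} |a(n)|·n^{−Re s}` converges, one has the absolutely convergent
Euler product `∑_{n≥1} a(n) n^{−s} = ∏_p (1 − a(p) p^{−s} + p^{k−1−2s})^{−1}`. -/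
theorem eigenform_euler_product (k : ℤ) (a : ℕ → ℂ)
    (h1 : a 1 = 1)
    (hmul : ∀ m n : ℕ, 1 ≤ m → 1 ≤ n → Nat.gcd m n = 1 → a (m * n) = a m * a n)
    (hrec : ∀ p : ℕ, p.Prime → ∀ j : ℕ, 1 ≤ j →
      a (p ^ (j + 1)) = a p * a (p ^ j) - (p : ℂ) ^ ((k : ℂ) - 1) * a (p ^ (j - 1)))
    (s : ℂ)
    (hconv : Summable (fun n : ℕ => ‖a (n + 1)‖ * ((n + 1 : ℕ) : ℝ) ^ (-s.re))) :
    Multipliable (fun p : Nat.Primes =>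
      (1 - a p * (p : ℂ) ^ (-s) + (p : ℂ) ^ ((k : ℂ) - 1 - 2 * s))⁻¹) ∧
    ∑' n : ℕ, a (n + 1) * ((n + 1 : ℕ) : ℂ) ^ (-s) =
      ∏' p : Nat.Primes,
        (1 - a p * (p : ℂ) ^ (-s) + (p : ℂ) ^ ((k : ℂ) - 1 - 2 * s))⁻¹ := by
  have hsum : Summable (‖term a s ·‖) := summable_norm_term_iff.2 hconv
  have hlocal (p : Nat.Primes) : ∑' e, term a s ((p : ℕ) ^ e) =
      (1 - a p * (p : ℂ) ^ (-s) + (p : ℂ) ^ ((k : ℂ) - 1 - 2 * s))⁻¹ :=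
    tsum_term_pow_eq_inv p.2.one_lt h1 (hrec p p.2) hsum
  have hprod := EulerProduct.eulerProduct_hasProd (by simp [h1]) (term_mul_of_coprime hmul s)
    hsum (term_zero a s)
  simp only [hlocal, tsum_term_eq_tsum_add_one] at hprod
  exact ⟨hprod.multipliable, hprod.tprod_eq.symm⟩
end

section
/- Let F be a cusp form of weight k for SL₂(ℤ) with Fourier expansion F(τ) = ∑_{n≥1} a(n)·q^n, and let L(F,s) = ∑_{n≥1} a(n)·n^{−s}. Then for every complex s with Re(s) > k/2 + 1, (2π)^{−s}·Γ(s)·L(F,s) = ∫₀^∞ F(it)·t^{s−1} dt, where Γ is the Gamma function and the integral converges absolutely. -/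
/-!
Both sides are compared through the `q`-expansion coefficients `c n` of `F`. For `0 < k`, the
completed `L`-function of a cusp form is the termwise Mellin transform of
`F(it) = ∑ c n e^{-2πnt}`, which gives `∫₀^∞ F(it) t^{s-1} dt = (2π)^{-s} Γ(s) ∑ c n n^{-s}`;
for `k ≤ 0` a level-one cusp form vanishes. It remains to replace `c` by `a`. If `∑ a n qⁿ`
converges on the whole unit disc, uniqueness of power-series coefficients gives `a n = c n`.
Otherwise it diverges on a whole horizontal line of `ℍ`, where the hypothesis on `F` then reads
`F = 0` (a divergent `tsum` is `0`), so every `c n` vanishes; and `∑ a n n^{-s}` diverges too,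
since a convergent Dirichlet series has polynomially bounded coefficients. Then both sides are `0`.
-/

open Complex UpperHalfPlane MeasureTheory

open scoped MatrixGroups

/-- The extension by `0` of a function on the upper half-plane to all of `ℂ`. -/
noncomputable def extendByZero (F : UpperHalfPlane → ℂ) : ℂ → ℂ := fun z =>
  if h : 0 < z.im then F ⟨z, h⟩ else 0

open Filter Topology Set
open scoped Real

local notation "𝕢" => Function.Periodic.qParam

lemma summable_mul_pow_of_summable_mul_cpow {c : ℕ → ℂ} {s z : ℂ}
    (hc : Summable fun n ↦ c n * (n : ℂ) ^ (-s)) (hz : ‖z‖ < 1) :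
    Summable fun n ↦ c n * z ^ n := by
  have hlim : Tendsto (fun n : ℕ ↦ (n : ℝ) ^ ⌈s.re⌉₊ * ‖z‖ ^ n) atTop (𝓝 0) :=
    tendsto_pow_const_mul_const_pow_of_lt_one _ (norm_nonneg z) hz
  refine hc.norm.of_norm_bounded_eventually_nat ?_
  filter_upwards [hlim.eventually (ge_mem_nhds one_pos), eventually_ge_atTop 1] with n hn hn1
  have hpos : (0 : ℝ) < n := by exact_mod_cast hn1
  calc ‖c n * z ^ n‖ = ‖c n * (n : ℂ) ^ (-s)‖ * ((n : ℝ) ^ s.re * ‖z‖ ^ n) := by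
        rw [norm_mul, norm_mul, norm_natCast_cpow_of_pos hn1, norm_pow, neg_re,
          Real.rpow_neg hpos.le]
        field_simp
    _ ≤ ‖c n * (n : ℂ) ^ (-s)‖ * ((n : ℝ) ^ ⌈s.re⌉₊ * ‖z‖ ^ n) := by
        gcongr
        rw [← Real.rpow_natCast]
        exact Real.rpow_le_rpow_of_exponent_le (by exact_mod_cast hn1) (Nat.le_ceil _)
    _ ≤ ‖c n * (n : ℂ) ^ (-s)‖ := mul_le_of_le_one_right (norm_nonneg _) hn

section QSeries

variable {a : ℕ → ℂ} {h : ℝ}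

lemma summable_qSeries_of_im_le (hh : 0 < h) {τ τ' : ℍ}
    (hτ : Summable fun n ↦ a (n + 1) * 𝕢 h τ ^ (n + 1)) (him : τ.im ≤ τ'.im) :
    Summable fun n ↦ a (n + 1) * 𝕢 h τ' ^ (n + 1) := by
  refine hτ.norm.of_norm_bounded fun n ↦ ?_
  have hq : ‖𝕢 h τ'‖ ≤ ‖𝕢 h τ‖ := by
    simp only [Function.Periodic.norm_qParam, Real.exp_le_exp, neg_mul, neg_div, neg_le_neg_iff]
    gcongr
    simpa using him
  simp only [norm_mul, norm_pow]
  gcongr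

lemma summable_qSeries_of_summable_mul_cpow {s : ℂ}
    (hD : Summable fun n ↦ a (n + 1) * ((n + 1 : ℕ) : ℂ) ^ (-s)) (τ : ℍ) :
    Summable fun n ↦ a (n + 1) * 𝕢 1 τ ^ (n + 1) := by
  refine (summable_nat_add_iff (f := fun n ↦ a n * 𝕢 1 τ ^ n) 1).mpr ?_
  refine summable_mul_pow_of_summable_mul_cpow
    ((summable_nat_add_iff (f := fun n ↦ a n * (n : ℂ) ^ (-s)) 1).mp hD) ?_
  simpa using norm_qParam_lt_one 1 τ

end QSeries

section LevelOne

variable {F : Type*} [FunLike F ℍ ℂ] {k : ℤ}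

lemma CuspFormClass.levelOne_eq_zero_of_weight_nonpos [CuspFormClass F 𝒮ℒ k] (hk : k ≤ 0)
    (f : F) : ⇑f = 0 := by
  rcases hk.lt_or_eq with hk | rfl
  · exact ModularFormClass.levelOne_neg_weight_eq_zero hk f
  · obtain ⟨c, hc⟩ := ModularFormClass.levelOne_weight_zero_const f
    have hc0 : c = 0 := by
      have := CuspFormClass.zero_at_infty f
      rw [hc] at this
      exact tendsto_nhds_unique tendsto_const_nhds this
    rw [hc, hc0]
    rfl

lemma ModularFormClass.qExpansion_coeff_eq_of_forall_summable {Γ : Subgroup (GL (Fin 2) ℝ)}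
    {h : ℝ} (hh : 0 < h) (hΓ : h ∈ Γ.strictPeriods) [ModularFormClass F Γ k] {f : F}
    {a : ℕ → ℂ} (hsum : ∀ τ : ℍ, Summable fun n ↦ a (n + 1) * 𝕢 h τ ^ (n + 1))
    (hf : ∀ τ : ℍ, f τ = ∑' n, a (n + 1) * 𝕢 h τ ^ (n + 1)) (n : ℕ) :
    a (n + 1) = (qExpansion h f).coeff (n + 1) := by
  have := ModularFormClass.qExpansion_coeff_unique (f := f) (c := Function.update a 0 0) hh hΓ
    (fun τ ↦ ?_) (n + 1)
  · simpa using this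
  · rw [← hasSum_nat_add_iff' 1]
    simpa [hf τ] using (hsum τ).hasSum

lemma ModularFormClass.qExpansion_eq_zero_of_forall_im_eq {Γ : Subgroup (GL (Fin 2) ℝ)}
    {h : ℝ} (hh : 0 < h) (hΓ : h ∈ Γ.strictPeriods) [ModularFormClass F Γ k]
    [Fact (IsCusp .infty Γ)] {f : F} {t : ℝ} (ht : 0 < t) (hf : ∀ τ : ℍ, τ.im = t → f τ = 0) :
    qExpansion h f = 0 := by
  ext n
  rw [qExpansion_coeff_eq_intervalIntegral hh
    (SlashInvariantFormClass.periodic_comp_ofComplex f hΓ) (ModularFormClass.holo f)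
    (ModularFormClass.bdd_at_infty f) n ht]
  simp [hf]

lemma CuspFormClass.hasMellin_levelOne [CuspFormClass F 𝒮ℒ k] (f : F) {s : ℂ}
    (hs : k / 2 + 1 < s.re) :
    HasMellin (fun t : ℝ ↦ f (ofComplex (Complex.I * t))) s
      ((2 * π) ^ (-s) * Gamma s *
        ∑' n : ℕ, (qExpansion 1 f).coeff (n + 1) * ((n + 1 : ℕ) : ℂ) ^ (-s)) := by
  by_cases hk : 0 < k
  · have hΛ := CuspForm.hasSum_Λ f hk hs
    rw [Subgroup.strictWidthInfty_SL2Z] at hΛ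
    have hs0 : s ≠ 0 := by
      rintro rfl
      have : (0 : ℝ) < k := by exact_mod_cast hk
      simp at hs
      linarith
    have hM := (CuspForm.isStrongFEPair hk f).hasMellin s
    refine ⟨hM.1, hM.2.trans ?_⟩
    change ModularForm.Λ hk f s = _
    rw [← hΛ.tsum_eq, hΛ.summable.tsum_eq_zero_add, ← tsum_mul_left]
    have h2π : (2 * (π : ℂ)) ^ (-s) = 2 ^ (-s) * (π : ℂ) ^ (-s) := by
      rw [← ofReal_ofNat, mul_cpow_ofReal_nonneg zero_le_two Real.pi_pos.le]
    simp only [CharP.cast_eq_zero, mul_zero, zero_div, ofReal_zero, zero_cpow hs0, div_zero,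
      zero_add]
    congr 1 with n
    rw [show ((2 * ((n + 1 : ℕ) : ℝ) / 1 : ℝ) : ℂ) = ((2 : ℕ) : ℂ) * ((n + 1 : ℕ) : ℂ) by
      push_cast; ring, natCast_mul_natCast_cpow, h2π]
    push_cast
    simp only [cpow_neg]
    ring
  · have hf : ⇑f = 0 := levelOne_eq_zero_of_weight_nonpos (not_lt.mp hk) f
    simp [hf, qExpansion_zero, HasMellin, MellinConvergent, mellin]

end LevelOne

lemma extendByZero_mul_cpow_eqOn (f : ℍ → ℂ) (s : ℂ) :
    EqOn (fun t : ℝ ↦ extendByZero f (t * Complex.I) * (t : ℂ) ^ (s - 1))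
      (fun t : ℝ ↦ (t : ℂ) ^ (s - 1) • f (ofComplex (Complex.I * t))) (Ioi 0) := by
  intro t (ht : 0 < t)
  dsimp only
  rw [ofComplex_apply_of_im_pos (by simpa using ht)]
  simp [extendByZero, ht, mul_comm]

/-- If `F` is a cusp form of weight `k` for `SL₂(ℤ)` with Fourier expansion
`F(τ) = ∑_{n≥1} a(n) q^n` and `L(F,s) = ∑_{n≥1} a(n) n^{−s}`, then for `Re s > k/2 + 1` the
integral `∫₀^∞ F(it) t^{s−1} dt` converges absolutely and equals `(2π)^{−s}·Γ(s)·L(F,s)`. -/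
theorem cuspform_mellin (k : ℤ) (F : CuspForm (⊤ : Subgroup SL(2, ℤ)) k) (a : ℕ → ℂ)
    (hF : ∀ τ : UpperHalfPlane,
      F τ = ∑' n : ℕ, a (n + 1) *
        Complex.exp (2 * (Real.pi : ℂ) * Complex.I * (τ : ℂ)) ^ (n + 1))
    (s : ℂ) (hs : (k : ℝ) / 2 + 1 < s.re) :
    IntegrableOn (fun t : ℝ =>
        extendByZero F ((t : ℂ) * Complex.I) * (t : ℂ) ^ (s - 1)) (Set.Ioi 0) ∧
    (2 * (Real.pi : ℂ)) ^ (-s) * Complex.Gamma s *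
        ∑' n : ℕ, a (n + 1) * ((n + 1 : ℕ) : ℂ) ^ (-s) =
      ∫ t in Set.Ioi (0 : ℝ),
        extendByZero F ((t : ℂ) * Complex.I) * (t : ℂ) ^ (s - 1) := by
  have : CuspFormClass (CuspForm (⊤ : Subgroup SL(2, ℤ)) k) 𝒮ℒ k := by
    rw [MonoidHom.range_eq_map]; infer_instance
  simp_rw [show ∀ τ : ℍ, cexp (2 * π * Complex.I * τ) = 𝕢 1 τ by
    simp [Function.Periodic.qParam]] at hF
  obtain ⟨hconv, hmellin⟩ := CuspFormClass.hasMellin_levelOne F hs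
  have hcoeff : ∑' n : ℕ, a (n + 1) * ((n + 1 : ℕ) : ℂ) ^ (-s) =
      ∑' n : ℕ, (qExpansion 1 F).coeff (n + 1) * ((n + 1 : ℕ) : ℂ) ^ (-s) := by
    by_cases hsum : ∀ τ : ℍ, Summable fun n ↦ a (n + 1) * 𝕢 1 τ ^ (n + 1)
    · simp_rw [ModularFormClass.qExpansion_coeff_eq_of_forall_summable one_pos
        one_mem_strictPeriods_SL hsum hF]
    · obtain ⟨τ₀, hτ₀⟩ := not_forall.mp hsum
      have hD : ¬ Summable fun n ↦ a (n + 1) * ((n + 1 : ℕ) : ℂ) ^ (-s) :=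
        fun hD ↦ hτ₀ (summable_qSeries_of_summable_mul_cpow hD τ₀)
      have hq : qExpansion 1 F = 0 :=
        ModularFormClass.qExpansion_eq_zero_of_forall_im_eq one_pos one_mem_strictPeriods_SL
          τ₀.im_pos fun τ hτ ↦ by
            rw [hF, tsum_eq_zero_of_not_summable fun hτsum ↦
              hτ₀ (summable_qSeries_of_im_le one_pos hτsum hτ.le)]
      rw [tsum_eq_zero_of_not_summable hD, hq]
      simp
  have hEq := extendByZero_mul_cpow_eqOn F s
  refine ⟨(integrableOn_congr_fun hEq measurableSet_Ioi).mpr hconv, ?_⟩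
  rw [hcoeff, ← hmellin, setIntegral_congr_fun measurableSet_Ioi hEq]
  rfl
end
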